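/- Let f be a bounded conjugate-linear functional on H, let θ ∈ Θ with |θ| < ν₀/(2 L_a), and let 0 < ε < 1. Then there is a unique v₀ ∈ V₀ such that ε⁻² a_θ(ℳ_θ v₀, ℳ_θ ṽ) + b_θ(ℳ_θ v₀, ℳ_θ ṽ) = ⟨f, ℳ_θ ṽ⟩ for all ṽ ∈ V₀, and if u_{ε,θ} ∈ H satisfies ε⁻² a_θ(u_{ε,θ}, ũ) + b_θ(u_{ε,θ}, ũ) = ⟨f, ũ⟩ for all ũ ∈ H, then ε⁻² a_θ[u_{ε,θ} − ℳ_θ v₀] + b_θ[u_{ε,θ} − ℳ_θ v₀] ≤ 8 K² ν₀⁻¹ ε² ‖f‖_{*θ}² and b_θ[u_{ε,θ} − ℳ_θ v₀] ≤ 16 K⁴ ν₀⁻² ε⁴ ‖f‖_{*θ}². -/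

import Mathlib

noncomputable section

open scoped Classical

/-- An abstract family of non-negative bounded sesquilinear forms `a θ`, `b θ`
(linear in the first argument, conjugate-linear in the second) on a complex Hilbert
space `H`, parametrised by `θ` in a compact subset `Θ` of `ℝⁿ`, such that
`(·,·)_θ := a θ + b θ` is a family of inner products whose norms are equivalent
to the norm of `H`. -/
structure FormFamily (n : ℕ) (H : Type*) [NormedAddCommGroup H] [InnerProductSpace ℂ H]
    [CompleteSpace H] where
  Θ : Set (EuclideanSpace ℝ (Fin n))
  compactΘ : IsCompact Θ
  a : EuclideanSpace ℝ (Fin n) → H → H → ℂ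
  b : EuclideanSpace ℝ (Fin n) → H → H → ℂ
  a_addL : ∀ θ ∈ Θ, ∀ u v w : H, a θ (u + v) w = a θ u w + a θ v w
  a_smulL : ∀ θ ∈ Θ, ∀ (c : ℂ) (u w : H), a θ (c • u) w = c * a θ u w
  a_addR : ∀ θ ∈ Θ, ∀ u v w : H, a θ u (v + w) = a θ u v + a θ u w
  a_smulR : ∀ θ ∈ Θ, ∀ (c : ℂ) (u w : H), a θ u (c • w) = starRingEnd ℂ c * a θ u w
  a_nonneg : ∀ θ ∈ Θ, ∀ u : H, 0 ≤ (a θ u u).re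
  a_im : ∀ θ ∈ Θ, ∀ u : H, (a θ u u).im = 0
  a_bdd : ∀ θ ∈ Θ, ∃ C : ℝ, ∀ u w : H, ‖a θ u w‖ ≤ C * ‖u‖ * ‖w‖
  b_addL : ∀ θ ∈ Θ, ∀ u v w : H, b θ (u + v) w = b θ u w + b θ v w
  b_smulL : ∀ θ ∈ Θ, ∀ (c : ℂ) (u w : H), b θ (c • u) w = c * b θ u w
  b_addR : ∀ θ ∈ Θ, ∀ u v w : H, b θ u (v + w) = b θ u v + b θ u w
  b_smulR : ∀ θ ∈ Θ, ∀ (c : ℂ) (u w : H), b θ u (c • w) = starRingEnd ℂ c * b θ u w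
  b_nonneg : ∀ θ ∈ Θ, ∀ u : H, 0 ≤ (b θ u u).re
  b_im : ∀ θ ∈ Θ, ∀ u : H, (b θ u u).im = 0
  b_bdd : ∀ θ ∈ Θ, ∃ C : ℝ, ∀ u w : H, ‖b θ u w‖ ≤ C * ‖u‖ * ‖w‖
  equivNorm : ∀ θ ∈ Θ, ∃ c₁ c₂ : ℝ, 0 < c₁ ∧ ∀ u : H,
    c₁ * ‖u‖ ^ 2 ≤ (a θ u u).re + (b θ u u).re ∧
      (a θ u u).re + (b θ u u).re ≤ c₂ * ‖u‖ ^ 2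

namespace FormFamily

variable {n : ℕ} {H : Type*} [NormedAddCommGroup H] [InnerProductSpace ℂ H] [CompleteSpace H]

/-- The inner product `(u, w)_θ := a θ u w + b θ u w`. -/
def ip (S : FormFamily n H) (θ : EuclideanSpace ℝ (Fin n)) (u w : H) : ℂ :=
  S.a θ u w + S.b θ u w

/-- The squared `θ`-norm `‖u‖_θ ^ 2 = (u, u)_θ`. -/
def nsq (S : FormFamily n H) (θ : EuclideanSpace ℝ (Fin n)) (u : H) : ℝ :=
  (S.ip θ u u).re

/-- The `θ`-norm `‖u‖_θ`. -/
def nrm (S : FormFamily n H) (θ : EuclideanSpace ℝ (Fin n)) (u : H) : ℝ :=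
  Real.sqrt (S.nsq θ u)

/-- The degeneracy subspace `V_θ = {v : a_θ[v] = 0}`. -/
def V (S : FormFamily n H) (θ : EuclideanSpace ℝ (Fin n)) : Set H :=
  {v : H | S.a θ v v = 0}

/-- `W_θ`, the orthogonal complement of `V_θ` in `H` with respect to `(·,·)_θ`. -/
def W (S : FormFamily n H) (θ : EuclideanSpace ℝ (Fin n)) : Set H :=
  {w : H | ∀ v ∈ S.V θ, S.ip θ w v = 0}

end FormFamily

/-- `f : H → ℂ` is a bounded conjugate-linear functional. -/
def IsBddConjLinear {H : Type*} [NormedAddCommGroup H] [InnerProductSpace ℂ H]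
    (f : H → ℂ) : Prop :=
  (∀ u v : H, f (u + v) = f u + f v) ∧
    (∀ (c : ℂ) (u : H), f (c • u) = starRingEnd ℂ c * f u) ∧
    ∃ C : ℝ, ∀ u : H, ‖f u‖ ≤ C * ‖u‖

/-- The homogenised form `a^h_θ(v,vt) = a''₀(v,vt)θ·θ - a₀(N_θ v, N_θ vt)`. -/
def ahom {n : ℕ} {H : Type*} [NormedAddCommGroup H] [InnerProductSpace ℂ H] [CompleteSpace H]
    (S : FormFamily n H) (a'' : H → H → Fin n → Fin n → ℂ)
    (N : EuclideanSpace ℝ (Fin n) → H → H) (θ : EuclideanSpace ℝ (Fin n)) (v vt : H) : ℂ :=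
  (∑ j, ∑ k, a'' v vt j k * (θ j : ℂ) * (θ k : ℂ)) - S.a 0 (N θ v) (N θ vt)

/-!
The map `v ↦ v + 𝒩_θ v` identifies `V₀` with the closed subspace
`G = {x | a_θ(x, w) = 0 for all w ∈ W₀}`: write `x = v + w` in `H = V₀ ⊕ W₀`; since
`|θ| < ν₀/(2L_a)`, the Lipschitz bound carries the gap over to `a_θ[w] ≥ (ν₀/2)‖w‖₀²` on `W₀`,
which forces `w = 𝒩_θ v`. On `G` the coercive form `B = ε⁻² a_θ + b_θ` has a unique Galerkin
solution (Lax–Milgram), which gives `v₀`.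

For the estimates, the error `e = u - ℳ_θ v₀` is `B`-orthogonal to `G`. Split `e = p + ω` with
`p ∈ G`, `ω ∈ W₀`. Testing with `ω` gives `B[e] = B(e, ω) = ⟨f, ω⟩ - b_θ(ℳ_θ v₀, ω) ≤ 2M‖ω‖_θ`,
because `b_θ[ℳ_θ v₀] ≤ B[u] ≤ M²`. The gap gives
`‖ω‖_θ² ≤ 2K²ν₀⁻¹ a_θ[ω] ≤ 2K²ν₀⁻¹ a_θ[e] ≤ 2K²ν₀⁻¹ ε² B[e]`, hence `B[e] ≤ 8K²ν₀⁻¹ε²M²`.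
The same test also yields `b_θ[e] ≤ Re b_θ(e, ω) ≤ ‖ω‖_θ²`, which gives the second bound.
-/
open scoped ComplexConjugate

theorem Real.le_sq_of_le_mul_sqrt {x m : ℝ} (hx : 0 ≤ x) (h : x ≤ m * √x) : x ≤ m ^ 2 := by
  nlinarith [Real.sq_sqrt hx, Real.sqrt_nonneg x]

abbrev SesqForm (E : Type*) [NormedAddCommGroup E] [InnerProductSpace ℂ E] :=
  E →L[ℂ] E →L⋆[ℂ] ℂ

namespace SesqForm

variable {E : Type*} [NormedAddCommGroup E] [InnerProductSpace ℂ E]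

structure IsNonneg (B : SesqForm E) : Prop where
  im_apply_self : ∀ x, (B x x).im = 0
  re_apply_self_nonneg : ∀ x, 0 ≤ (B x x).re

def leftOrthogonal (B : SesqForm E) (s : Set E) : Submodule ℂ E where
  carrier := {x | ∀ y ∈ s, B x y = 0}
  add_mem' hx hx' y hy := by simp [hx y hy, hx' y hy]
  zero_mem' y _ := by simp
  smul_mem' c x hx y hy := by simp [hx y hy]

theorem mem_leftOrthogonal {B : SesqForm E} {s : Set E} {x : E} :
    x ∈ B.leftOrthogonal s ↔ ∀ y ∈ s, B x y = 0 := Iff.rfl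

theorem isClosed_leftOrthogonal (B : SesqForm E) (s : Set E) :
    IsClosed (B.leftOrthogonal s : Set E) := by
  have : (B.leftOrthogonal s : Set E) = ⋂ y ∈ s, {x | B x y = 0} := by
    ext x; simp [mem_leftOrthogonal]
  rw [this]
  exact isClosed_biInter fun y _ => isClosed_eq (by fun_prop) continuous_const

namespace IsNonneg

variable {B : SesqForm E} (hB : IsNonneg B)
include hB

-- Polarization: the diagonal values at `x + y` and `x + I • y` are real.
theorem conj_apply (x y : E) : conj (B x y) = B y x := by
  have h1 := hB.im_apply_self (x + y)
  have h2 := hB.im_apply_self (x + Complex.I • y)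
  have hx := hB.im_apply_self x
  have hy := hB.im_apply_self y
  simp only [map_add, map_smul, map_smulₛₗ, add_apply, FunLike.coe_smul, Pi.smul_apply,
    smul_eq_mul, Complex.conj_I, Complex.add_im, Complex.mul_im, Complex.I_re, Complex.I_im,
    Complex.neg_re, Complex.neg_im, Complex.add_re, Complex.mul_re] at h1 h2
  apply Complex.ext <;> simp <;> nlinarith

theorem norm_apply_le (x y : E) : ‖B x y‖ ≤ √(B x x).re * √(B y y).re := by
  let core : PreInnerProductSpace.Core ℂ E :=
    { inner x y := B y x
      conj_inner_symm x y := hB.conj_apply x y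
      re_inner_nonneg x := hB.re_apply_self_nonneg x
      add_left x y z := map_add (B z) x y
      smul_left x y r := map_smulₛₗ (B y) r x }
  have h := @InnerProductSpace.Core.inner_mul_inner_self_le ℂ E _ _ _ core y x
  change ‖B x y‖ * ‖B y x‖ ≤ (B y y).re * (B x x).re at h
  rw [← hB.conj_apply x y, Complex.norm_conj, ← sq, mul_comm] at h
  rw [← Real.sqrt_mul (hB.re_apply_self_nonneg x)]
  exact Real.le_sqrt_of_sq_le h

theorem apply_eq_zero_of_apply_self_eq_zero {x : E} (hx : B x x = 0) (y : E) : B x y = 0 := by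
  simpa [hx] using hB.norm_apply_le x y

def radical : Submodule ℂ E where
  carrier := {x | B x x = 0}
  add_mem' {x x'} hx hx' := by
    simp [hB.apply_eq_zero_of_apply_self_eq_zero hx, hB.apply_eq_zero_of_apply_self_eq_zero hx']
  zero_mem' := by simp
  smul_mem' c x (hx : B x x = 0) := by simp [hx]

theorem radical_eq_leftOrthogonal : hB.radical = B.leftOrthogonal Set.univ :=
  Submodule.ext fun x => ⟨fun hx y _ => hB.apply_eq_zero_of_apply_self_eq_zero hx y,
    fun hx => hx x (Set.mem_univ x)⟩

theorem isClosed_radical : IsClosed (hB.radical : Set E) := by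
  rw [hB.radical_eq_leftOrthogonal]
  exact B.isClosed_leftOrthogonal Set.univ

theorem re_apply_self_add {x y : E} (hxy : B x y = 0) :
    (B (x + y) (x + y)).re = (B x x).re + (B y y).re := by
  have hyx : B y x = 0 := by rw [← hB.conj_apply x y, hxy, map_zero]
  simp [hxy, hyx]

theorem re_apply_self_le_add {x y : E} (hxy : B x y = 0) :
    (B y y).re ≤ (B (x + y) (x + y)).re := by
  rw [hB.re_apply_self_add hxy]; linarith [hB.2 x]

theorem add {B' : SesqForm E} (hB' : B'.IsNonneg) : (B + B').IsNonneg where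
  im_apply_self x := by simp [hB.1 x, hB'.1 x]
  re_apply_self_nonneg x := by simpa using add_nonneg (hB.2 x) (hB'.2 x)

theorem re_apply_self_le_add_apply_self (B' : SesqForm E) (x : E) :
    (B' x x).re ≤ ((B + B') x x).re := by
  rw [add_apply, add_apply, Complex.add_re]; linarith [hB.2 x]

end IsNonneg

section Coercive

def IsCoercive (B : SesqForm E) : Prop :=
  ∃ c > 0, ∀ x, c * ‖x‖ ^ 2 ≤ (B x x).re

theorem IsCoercive.eq_zero_of_re_apply_self_nonpos {B : SesqForm E} (hB : B.IsCoercive) {x : E}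
    (hx : (B x x).re ≤ 0) : x = 0 := by
  obtain ⟨c, hc, hcB⟩ := hB
  have : ‖x‖ ^ 2 ≤ 0 := nonpos_of_mul_nonpos_right ((hcB x).trans hx) hc
  simpa using this

theorem IsCoercive.eq_zero_of_apply_self_eq_zero_of_le {a b : SesqForm E}
    (hab : (a + b).IsCoercive) {κ : ℝ} {w : E} (hw : ((a + b) w w).re ≤ κ * (a w w).re)
    (h : a w w = 0) : w = 0 :=
  hab.eq_zero_of_re_apply_self_nonpos (by simpa only [h, Complex.zero_re, mul_zero] using hw)

def reRestrict (B : SesqForm E) (K : Submodule ℂ E) : K →L[ℝ] K →L[ℝ] ℝ :=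
  LinearMap.mkContinuous₂
    (LinearMap.mk₂ ℝ (fun x y : K => (B x y).re)
      (fun x x' y => by simp)
      (fun r x y => by
        simp only [Submodule.coe_smul_of_tower, ← Complex.coe_smul, map_smul,
          smul_apply, smul_eq_mul, Complex.re_ofReal_mul])
      (fun x y y' => by simp)
      (fun r x y => by
        simp only [Submodule.coe_smul_of_tower, ← Complex.coe_smul, map_smulₛₗ,
          Complex.conj_ofReal, smul_eq_mul, Complex.re_ofReal_mul]))
    ‖B‖ (fun x y => by
      simp only [LinearMap.mk₂_apply, Real.norm_eq_abs]
      exact (Complex.abs_re_le_norm _).trans (B.le_opNorm₂ x y))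

@[simp] theorem reRestrict_apply (B : SesqForm E) (K : Submodule ℂ E) (x y : K) :
    reRestrict B K x y = (B x y).re := rfl

def reRestrictDual (f : E →L⋆[ℂ] ℂ) (K : Submodule ℂ E) : K →L[ℝ] ℝ :=
  LinearMap.mkContinuous
    { toFun := fun y : K => (f y).re
      map_add' := fun y y' => by simp
      map_smul' := fun r y => by
        simp only [Submodule.coe_smul_of_tower, ← Complex.coe_smul, map_smulₛₗ,
          Complex.conj_ofReal, smul_eq_mul, Complex.re_ofReal_mul, RingHom.id_apply] }
    ‖f‖ (fun y => by
      simp only [LinearMap.coe_mk, AddHom.coe_mk, Real.norm_eq_abs]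
      exact (Complex.abs_re_le_norm _).trans (f.le_opNorm y))

/-- Lax–Milgram on a closed subspace. Mathlib's version is for real Hilbert spaces, so it is
applied to `Re B` on `K` viewed as a real space; testing with `I • y` recovers the imaginary
part. -/
theorem IsCoercive.existsUnique_apply_eq [CompleteSpace E] {B : SesqForm E} (hB : B.IsCoercive)
    {K : Submodule ℂ E} (hK : IsClosed (K : Set E)) (f : E →L⋆[ℂ] ℂ) :
    ∃! x, x ∈ K ∧ ∀ y ∈ K, B x y = f y := by
  obtain ⟨c, hc, hcB⟩ := hB
  have : CompleteSpace K := hK.completeSpace_coe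
  let _ : InnerProductSpace ℝ K := InnerProductSpace.complexToReal
  have hcoer : _root_.IsCoercive (reRestrict B K) :=
    ⟨c, hc, fun x => by simpa [sq, mul_assoc] using hcB x⟩
  set x : K := hcoer.continuousLinearEquivOfBilin.symm
    ((InnerProductSpace.toDual ℝ K).symm (reRestrictDual f K))
  have hre : ∀ y : K, (B x y).re = (f y).re := fun y => by
    simpa [x, reRestrictDual] using (hcoer.continuousLinearEquivOfBilin_apply x y).symm
  have hsol : ∀ y ∈ K, B x y = f y := fun y hy => by
    refine Complex.ext (hre ⟨y, hy⟩) ?_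
    simpa using hre ⟨Complex.I • y, K.smul_mem _ hy⟩
  refine ⟨x, ⟨x.2, hsol⟩, fun z ⟨hzK, hz⟩ => ?_⟩
  have hzx : z - x ∈ K := K.sub_mem hzK x.2
  refine sub_eq_zero.mp (IsCoercive.eq_zero_of_re_apply_self_nonpos ⟨c, hc, hcB⟩ ?_)
  rw [map_sub B, sub_apply, hz _ hzx, hsol _ hzx, sub_self, Complex.zero_re]

theorem IsCoercive.exists_sub_mem_leftOrthogonal [CompleteSpace E] {B : SesqForm E}
    (hB : B.IsCoercive) {K : Submodule ℂ E} (hK : IsClosed (K : Set E)) (x : E) :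
    ∃ v ∈ K, x - v ∈ B.leftOrthogonal K := by
  obtain ⟨v, ⟨hvK, hv⟩, -⟩ := hB.existsUnique_apply_eq hK (B x)
  exact ⟨v, hvK, fun y hy => by rw [map_sub B, sub_apply, hv y hy, sub_self]⟩

theorem IsCoercive.isCompl_leftOrthogonal [CompleteSpace E] {B : SesqForm E}
    (hB : B.IsCoercive) {K : Submodule ℂ E} (hK : IsClosed (K : Set E)) :
    IsCompl K (B.leftOrthogonal K) := by
  refine ⟨Submodule.disjoint_def.mpr fun x hxK hx => ?_, ?_⟩
  · exact hB.eq_zero_of_re_apply_self_nonpos (by simp [hx x hxK])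
  · refine Submodule.codisjoint_iff_exists_add_eq.mpr fun x => ?_
    obtain ⟨v, hvK, hv⟩ := hB.exists_sub_mem_leftOrthogonal hK x
    exact ⟨v, x - v, hvK, hv, add_sub_cancel v x⟩

end Coercive

section Corrector

variable {a : SesqForm E} {V W : Submodule ℂ E} {N : E → E}

def IsCorrector (a : SesqForm E) (V W : Submodule ℂ E) (N : E → E) : Prop :=
  ∀ v ∈ V, N v ∈ W ∧ ∀ w ∈ W, a (N v) w = -a v w

namespace IsCorrector

variable (hN : IsCorrector a V W N)
include hN

theorem add_mem_leftOrthogonal {v : E} (hv : v ∈ V) : v + N v ∈ a.leftOrthogonal W :=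
  fun w hw => by rw [map_add a, add_apply, (hN v hv).2 w hw, add_neg_cancel]

theorem eq_of_add_eq_add (hVW : Disjoint V W) {v v' : E} (hv : v ∈ V) (hv' : v' ∈ V)
    (h : v + N v = v' + N v') : v = v' := by
  have hdiff : v - v' = N v' - N v := by rw [sub_eq_sub_iff_add_eq_add, h, add_comm]
  refine sub_eq_zero.mp (Submodule.disjoint_def.mp hVW _ (V.sub_mem hv hv') ?_)
  rw [hdiff]
  exact W.sub_mem (hN v' hv').1 (hN v hv).1

theorem exists_eq_add (hVW : IsCompl V W) (x : E) :
    ∃ p ∈ a.leftOrthogonal W, ∃ ω ∈ W, x = p + ω := by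
  obtain ⟨v, w, hv, hw, rfl⟩ := Submodule.codisjoint_iff_exists_add_eq.mp hVW.codisjoint x
  exact ⟨v + N v, hN.add_mem_leftOrthogonal hv, w - N v, W.sub_mem hw (hN v hv).1, by abel⟩

theorem exists_add_eq (hVW : IsCompl V W) (ha : ∀ w ∈ W, a w w = 0 → w = 0) {x : E}
    (hx : x ∈ a.leftOrthogonal W) : ∃ v ∈ V, v + N v = x := by
  obtain ⟨v, w, hv, hw, rfl⟩ := Submodule.codisjoint_iff_exists_add_eq.mp hVW.codisjoint x
  have hd : w - N v ∈ W := W.sub_mem hw (hN v hv).1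
  have hwd : a (w - N v) (w - N v) = a (v + w) (w - N v) := by
    rw [map_add a, map_sub a, add_apply, sub_apply, (hN v hv).2 _ hd]; ring
  have hw' : w = N v := sub_eq_zero.mp (ha _ hd (hwd.trans (hx _ hd)))
  exact ⟨v, hv, by rw [hw']⟩

theorem forall_mem_leftOrthogonal_iff (hVW : IsCompl V W) (ha : ∀ w ∈ W, a w w = 0 → w = 0)
    {P : E → Prop} : (∀ g ∈ a.leftOrthogonal W, P g) ↔ ∀ v ∈ V, P (v + N v) := by
  refine ⟨fun h v hv => h _ (hN.add_mem_leftOrthogonal hv), fun h g hg => ?_⟩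
  obtain ⟨v, hv, rfl⟩ := hN.exists_add_eq hVW ha hg
  exact h v hv

theorem existsUnique_galerkin [CompleteSpace E] (hVW : IsCompl V W)
    (ha : ∀ w ∈ W, a w w = 0 → w = 0) {B : SesqForm E} (hB : B.IsCoercive) (f : E →L⋆[ℂ] ℂ) :
    ∃! v, v ∈ V ∧ ∀ v' ∈ V, B (v + N v) (v' + N v') = f (v' + N v') := by
  obtain ⟨x, ⟨hxG, hx⟩, hxuniq⟩ := hB.existsUnique_apply_eq (a.isClosed_leftOrthogonal W) f
  obtain ⟨v, hv, rfl⟩ := hN.exists_add_eq hVW ha hxG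
  refine ⟨v, ⟨hv, (hN.forall_mem_leftOrthogonal_iff hVW ha).mp hx⟩, fun v' ⟨hv', h⟩ => ?_⟩
  exact hN.eq_of_add_eq_add hVW.disjoint hv' hv (hxuniq _
    ⟨hN.add_mem_leftOrthogonal hv', (hN.forall_mem_leftOrthogonal_iff hVW ha).mpr h⟩)

end IsCorrector

end Corrector

section Perturbed

variable {a b : SesqForm E} {ε : ℝ}

def perturbed (ε : ℝ) (a b : SesqForm E) : SesqForm E := ((ε : ℂ) ^ 2)⁻¹ • a + b

theorem perturbed_apply (x y : E) :
    perturbed ε a b x y = ((ε : ℂ) ^ 2)⁻¹ * a x y + b x y := rfl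

theorem perturbed_apply_eq_ofReal_mul (x y : E) :
    perturbed ε a b x y = (((ε ^ 2)⁻¹ : ℝ) : ℂ) * a x y + b x y := by
  rw [perturbed_apply]; push_cast; rfl

theorem re_perturbed_apply (x y : E) :
    (perturbed ε a b x y).re = (ε ^ 2)⁻¹ * (a x y).re + (b x y).re := by
  rw [perturbed_apply_eq_ofReal_mul, Complex.add_re, Complex.re_ofReal_mul]

theorem IsNonneg.perturbed (ha : a.IsNonneg) (hb : b.IsNonneg) : (perturbed ε a b).IsNonneg where
  im_apply_self x := by
    rw [perturbed_apply_eq_ofReal_mul, Complex.add_im, Complex.im_ofReal_mul, ha.1, hb.1, mul_zero,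
      add_zero]
  re_apply_self_nonneg x := by
    rw [re_perturbed_apply]; exact add_nonneg (mul_nonneg (by positivity) (ha.2 x)) (hb.2 x)

theorem re_add_apply_self_le_perturbed (ha : a.IsNonneg) (hε0 : 0 < ε) (hε1 : ε ≤ 1) (x : E) :
    ((a + b) x x).re ≤ (perturbed ε a b x x).re := by
  have hε : 1 ≤ (ε ^ 2)⁻¹ := one_le_inv₀ (by positivity) |>.mpr (by nlinarith)
  rw [re_perturbed_apply, add_apply, add_apply, Complex.add_re]
  nlinarith [ha.2 x]

theorem re_apply_self_le_mul_perturbed (hb : b.IsNonneg) (hε0 : 0 < ε) (x : E) :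
    (a x x).re ≤ ε ^ 2 * (perturbed ε a b x x).re := by
  rw [re_perturbed_apply, mul_add, ← mul_assoc, mul_inv_cancel₀ (by positivity), one_mul]
  nlinarith [hb.2 x]

theorem IsCoercive.perturbed (hab : (a + b).IsCoercive) (ha : a.IsNonneg) (hε0 : 0 < ε)
    (hε1 : ε ≤ 1) : (perturbed ε a b).IsCoercive := by
  obtain ⟨c, hc, hcab⟩ := hab
  exact ⟨c, hc, fun x => (hcab x).trans (re_add_apply_self_le_perturbed ha hε0 hε1 x)⟩

theorem re_add_apply_self_le_mul_perturbed (ha : a.IsNonneg) (hb : b.IsNonneg) (hε0 : 0 < ε)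
    {κ : ℝ} (hκ : 0 ≤ κ) {p ω : E} (hpω : a p ω = 0) (hω : ((a + b) ω ω).re ≤ κ * (a ω ω).re) :
    ((a + b) ω ω).re ≤ κ * ε ^ 2 * (perturbed ε a b (p + ω) (p + ω)).re := calc
  _ ≤ κ * (a ω ω).re := hω
  _ ≤ κ * (a (p + ω) (p + ω)).re := mul_le_mul_of_nonneg_left (ha.re_apply_self_le_add hpω) hκ
  _ ≤ κ * (ε ^ 2 * (perturbed ε a b (p + ω) (p + ω)).re) :=
    mul_le_mul_of_nonneg_left (re_apply_self_le_mul_perturbed hb hε0 _) hκ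
  _ = κ * ε ^ 2 * (perturbed ε a b (p + ω) (p + ω)).re := by ring

theorem re_apply_self_add_le (ha : a.IsNonneg) (hb : b.IsNonneg) {p ω : E} (hpω : a p ω = 0)
    (hp : perturbed ε a b (p + ω) p = 0) : (b (p + ω) (p + ω)).re ≤ ((a + b) ω ω).re := by
  have hBω : perturbed ε a b (p + ω) (p + ω) = perturbed ε a b (p + ω) ω := by
    rw [map_add (perturbed ε a b (p + ω)), hp, zero_add]
  have haω := ha.re_apply_self_le_add hpω
  have hae : a (p + ω) ω = a ω ω := by rw [map_add a, add_apply, hpω, zero_add]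
  have hbe : (b (p + ω) (p + ω)).re ≤ (b (p + ω) ω).re := by
    have h := congrArg Complex.re hBω
    rw [re_perturbed_apply, re_perturbed_apply, hae] at h
    nlinarith [inv_nonneg.mpr (sq_nonneg ε)]
  have hbω := Real.sqrt_le_sqrt (ha.re_apply_self_le_add_apply_self b ω)
  rw [← Real.sq_sqrt ((ha.add hb).2 ω)]
  refine Real.le_sq_of_le_mul_sqrt (hb.2 _) (hbe.trans ((Complex.re_le_norm _).trans ?_))
  rw [mul_comm √((a + b) ω ω).re]
  exact (hb.norm_apply_le _ ω).trans (mul_le_mul_of_nonneg_left hbω (Real.sqrt_nonneg _))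

theorem perturbed_apply_sub_eq_zero {f : E → ℂ} {u x₀ : E} {G : Set E}
    (hu : ∀ y, perturbed ε a b u y = f y) (hx₀f : ∀ g ∈ G, perturbed ε a b x₀ g = f g) {g : E}
    (hg : g ∈ G) : perturbed ε a b (u - x₀) g = 0 := by
  rw [map_sub, sub_apply, hu, hx₀f g hg, sub_self]

variable (ha : a.IsNonneg) (hb : b.IsNonneg) (hε0 : 0 < ε) (hε1 : ε ≤ 1)
  {f : E → ℂ} {M : ℝ} (hf : ∀ y, ‖f y‖ ≤ M * √((a + b) y y).re)
  {u : E} (hu : ∀ y, perturbed ε a b u y = f y)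
include ha hb hε0 hε1 hf hu

theorem re_perturbed_apply_self_le_sq : (perturbed ε a b u u).re ≤ M ^ 2 := by
  rw [← sq_abs]
  refine Real.le_sq_of_le_mul_sqrt ((ha.perturbed hb).2 u) ?_
  calc (perturbed ε a b u u).re = (f u).re := by rw [← hu u]
    _ ≤ ‖f u‖ := Complex.re_le_norm _
    _ ≤ M * √((a + b) u u).re := hf u
    _ ≤ |M| * √((a + b) u u).re := by gcongr; exact le_abs_self M
    _ ≤ |M| * √(perturbed ε a b u u).re := mul_le_mul_of_nonneg_left
      (Real.sqrt_le_sqrt (re_add_apply_self_le_perturbed ha hε0 hε1 u)) (abs_nonneg M)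

variable {W : Set E} {x₀ : E} (hx₀ : x₀ ∈ a.leftOrthogonal W)
  (hx₀f : ∀ g ∈ a.leftOrthogonal W, perturbed ε a b x₀ g = f g)
include hx₀ hx₀f

theorem re_apply_self_le_sq_of_galerkin : (b x₀ x₀).re ≤ M ^ 2 := by
  have horth := perturbed_apply_sub_eq_zero hu hx₀f hx₀
  calc (b x₀ x₀).re ≤ (perturbed ε a b x₀ x₀).re := by
        rw [re_perturbed_apply]; nlinarith [ha.2 x₀, inv_nonneg.mpr (sq_nonneg ε)]
    _ ≤ (perturbed ε a b (u - x₀) (u - x₀)).re + (perturbed ε a b x₀ x₀).re :=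
        le_add_of_nonneg_left ((ha.perturbed hb).2 _)
    _ = (perturbed ε a b u u).re := by
        rw [← (ha.perturbed hb).re_apply_self_add horth, sub_add_cancel]
    _ ≤ M ^ 2 := re_perturbed_apply_self_le_sq ha hb hε0 hε1 hf hu

theorem re_perturbed_apply_self_sub_le {p ω : E} (hp : p ∈ a.leftOrthogonal W) (hω : ω ∈ W)
    (hpω : u - x₀ = p + ω) :
    (perturbed ε a b (u - x₀) (u - x₀)).re ≤ 2 * |M| * √((a + b) ω ω).re := by
  set B := perturbed ε a b
  have hbω := Real.sqrt_le_sqrt (ha.re_apply_self_le_add_apply_self b ω)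
  have hbx₀ : √(b x₀ x₀).re ≤ |M| := by
    simpa [Real.sqrt_sq_eq_abs] using
      Real.sqrt_le_sqrt (re_apply_self_le_sq_of_galerkin ha hb hε0 hε1 hf hu hx₀ hx₀f)
  calc (B (u - x₀) (u - x₀)).re = (B (u - x₀) ω).re := by
        conv_lhs => arg 1; arg 2; rw [hpω]
        rw [map_add (B (u - x₀)), perturbed_apply_sub_eq_zero hu hx₀f hp, zero_add]
    _ = (f ω - b x₀ ω).re := by
        rw [map_sub B, sub_apply, hu, perturbed_apply, hx₀ ω hω, mul_zero, zero_add]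
    _ ≤ ‖f ω‖ + ‖b x₀ ω‖ := (Complex.re_le_norm _).trans (norm_sub_le _ _)
    _ ≤ |M| * √((a + b) ω ω).re + |M| * √((a + b) ω ω).re := by
        gcongr
        · exact (hf ω).trans (by gcongr; exact le_abs_self M)
        · exact (hb.norm_apply_le x₀ ω).trans
            (mul_le_mul hbx₀ hbω (Real.sqrt_nonneg _) (abs_nonneg M))
    _ = 2 * |M| * √((a + b) ω ω).re := by ring

theorem galerkin_error_le {κ : ℝ} (hκ : 0 ≤ κ) (hW : ∀ ω ∈ W, ((a + b) ω ω).re ≤ κ * (a ω ω).re)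
    (hdec : ∀ x, ∃ p ∈ a.leftOrthogonal W, ∃ ω ∈ W, x = p + ω) :
    (perturbed ε a b (u - x₀) (u - x₀)).re ≤ 4 * κ * ε ^ 2 * M ^ 2 ∧
      (b (u - x₀) (u - x₀)).re ≤ 4 * κ ^ 2 * ε ^ 4 * M ^ 2 := by
  obtain ⟨p, hp, ω, hω, hpω⟩ := hdec (u - x₀)
  have horth := perturbed_apply_sub_eq_zero hu hx₀f hp
  set X := (perturbed ε a b (u - x₀) (u - x₀)).re
  have hωX : ((a + b) ω ω).re ≤ κ * ε ^ 2 * X := by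
    simp only [X, hpω]; exact re_add_apply_self_le_mul_perturbed ha hb hε0 hκ (hp ω hω) (hW ω hω)
  have hX : X ≤ 2 * |M| * √(κ * ε ^ 2) * √X := calc
    X ≤ 2 * |M| * √((a + b) ω ω).re :=
      re_perturbed_apply_self_sub_le ha hb hε0 hε1 hf hu hx₀ hx₀f hp hω hpω
    _ ≤ 2 * |M| * √(κ * ε ^ 2 * X) := by gcongr
    _ = 2 * |M| * √(κ * ε ^ 2) * √X := by rw [Real.sqrt_mul (by positivity)]; ring
  have hXM : X ≤ 4 * κ * ε ^ 2 * M ^ 2 := calc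
    X ≤ (2 * |M| * √(κ * ε ^ 2)) ^ 2 := Real.le_sq_of_le_mul_sqrt ((ha.perturbed hb).2 _) hX
    _ = 4 * κ * ε ^ 2 * M ^ 2 := by
      rw [mul_pow, mul_pow, Real.sq_sqrt (by positivity), sq_abs]; ring
  refine ⟨hXM, ?_⟩
  calc (b (u - x₀) (u - x₀)).re ≤ ((a + b) ω ω).re := by
        rw [hpω] at horth ⊢; exact re_apply_self_add_le ha hb (hp ω hω) horth
    _ ≤ κ * ε ^ 2 * X := hωX
    _ ≤ κ * ε ^ 2 * (4 * κ * ε ^ 2 * M ^ 2) := by gcongr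
    _ = 4 * κ ^ 2 * ε ^ 4 * M ^ 2 := by ring

end Perturbed

end SesqForm

namespace FormFamily

variable {n : ℕ} {H : Type*} [NormedAddCommGroup H] [InnerProductSpace ℂ H] [CompleteSpace H]
  (S : FormFamily n H) {θ : EuclideanSpace ℝ (Fin n)}

def aForm (hθ : θ ∈ S.Θ) : SesqForm H :=
  LinearMap.mkContinuous₂
    (LinearMap.mk₂'ₛₗ (RingHom.id ℂ) (starRingEnd ℂ) (S.a θ) (S.a_addL θ hθ) (S.a_smulL θ hθ)
      (S.a_addR θ hθ) (S.a_smulR θ hθ))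
    (S.a_bdd θ hθ).choose (S.a_bdd θ hθ).choose_spec

def bForm (hθ : θ ∈ S.Θ) : SesqForm H :=
  LinearMap.mkContinuous₂
    (LinearMap.mk₂'ₛₗ (RingHom.id ℂ) (starRingEnd ℂ) (S.b θ) (S.b_addL θ hθ) (S.b_smulL θ hθ)
      (S.b_addR θ hθ) (S.b_smulR θ hθ))
    (S.b_bdd θ hθ).choose (S.b_bdd θ hθ).choose_spec

@[simp] theorem aForm_apply (hθ : θ ∈ S.Θ) (u w : H) : S.aForm hθ u w = S.a θ u w := rfl

@[simp] theorem bForm_apply (hθ : θ ∈ S.Θ) (u w : H) : S.bForm hθ u w = S.b θ u w := rfl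

theorem isNonneg_aForm (hθ : θ ∈ S.Θ) : (S.aForm hθ).IsNonneg :=
  ⟨S.a_im θ hθ, S.a_nonneg θ hθ⟩

theorem isNonneg_bForm (hθ : θ ∈ S.Θ) : (S.bForm hθ).IsNonneg :=
  ⟨S.b_im θ hθ, S.b_nonneg θ hθ⟩

theorem re_add_apply_self (hθ : θ ∈ S.Θ) (u : H) :
    ((S.aForm hθ + S.bForm hθ) u u).re = S.nsq θ u := by
  simp [nsq, ip]

theorem nsq_nonneg (hθ : θ ∈ S.Θ) (u : H) : 0 ≤ S.nsq θ u :=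
  S.re_add_apply_self hθ u ▸ ((S.isNonneg_aForm hθ).add (S.isNonneg_bForm hθ)).2 u

theorem nrm_sq (hθ : θ ∈ S.Θ) (u : H) : S.nrm θ u ^ 2 = S.nsq θ u :=
  Real.sq_sqrt (S.nsq_nonneg hθ u)

theorem isCoercive_add (hθ : θ ∈ S.Θ) : (S.aForm hθ + S.bForm hθ).IsCoercive := by
  obtain ⟨c, _, hc, hcu⟩ := S.equivNorm θ hθ
  exact ⟨c, hc, fun u => by simpa using (hcu u).1⟩

theorem nsq_le_of_mem_W (h0 : 0 ∈ S.Θ) (hθ : θ ∈ S.Θ) {K δ ν₀ : ℝ}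
    (hK : ∀ u, S.nrm θ u ≤ K * S.nrm 0 u)
    (hδ : ∀ w, ‖S.a 0 w w - S.a θ w w‖ ≤ δ * S.nrm 0 w * S.nrm 0 w) (hδν : δ ≤ ν₀ / 2)
    (hν₀ : 0 < ν₀) (hgap0 : ∀ w ∈ S.W 0, ν₀ * S.nsq 0 w ≤ (S.a 0 w w).re)
    {w : H} (hw : w ∈ S.W 0) : S.nsq θ w ≤ 2 * K ^ 2 / ν₀ * (S.a θ w w).re := by
  have hgap : ν₀ / 2 * S.nsq 0 w ≤ (S.a θ w w).re := by
    have hdiff := (Complex.re_le_norm _).trans (hδ w)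
    rw [Complex.sub_re, mul_assoc, ← sq, S.nrm_sq h0] at hdiff
    nlinarith [hgap0 w hw, S.nsq_nonneg h0 w]
  calc S.nsq θ w = S.nrm θ w ^ 2 := (S.nrm_sq hθ w).symm
    _ ≤ (K * S.nrm 0 w) ^ 2 := by gcongr; exacts [Real.sqrt_nonneg _, hK w]
    _ = K ^ 2 * S.nsq 0 w := by rw [mul_pow, S.nrm_sq h0]
    _ ≤ K ^ 2 * (2 / ν₀ * (S.a θ w w).re) := by
      gcongr; rw [div_mul_eq_mul_div, le_div_iff₀ hν₀]; linarith
    _ = 2 * K ^ 2 / ν₀ * (S.a θ w w).re := by ring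

end FormFamily

def IsBddConjLinear.toContinuousLinearMap {H : Type*} [NormedAddCommGroup H]
    [InnerProductSpace ℂ H] {f : H → ℂ} (hf : IsBddConjLinear f) : H →L⋆[ℂ] ℂ :=
  LinearMap.mkContinuous { toFun := f, map_add' := hf.1, map_smul' := hf.2.1 }
    hf.2.2.choose hf.2.2.choose_spec

theorem statement4_general
    {n : ℕ} {H : Type*} [NormedAddCommGroup H] [InnerProductSpace ℂ H]
    [CompleteSpace H] (S : FormFamily n H)
    (K : ℝ)
    (hK : ∀ θ₁ ∈ S.Θ, ∀ θ₂ ∈ S.Θ, ∀ u : H, S.nrm θ₁ u ≤ K * S.nrm θ₂ u)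
    (La : ℝ) (hLa0 : 0 < La)
    (hLa : ∀ θ₁ ∈ S.Θ, ∀ θ₂ ∈ S.Θ, ∀ u w : H,
      ‖S.a θ₁ u w - S.a θ₂ u w‖ ≤ La * ‖θ₁ - θ₂‖ * S.nrm θ₁ u * S.nrm θ₁ w)
    (h0 : (0 : EuclideanSpace ℝ (Fin n)) ∈ S.Θ)
    (ν₀ : ℝ) (hν₀ : 0 < ν₀)
    (hgap0 : ∀ w ∈ S.W 0, ν₀ * S.nsq 0 w ≤ (S.a 0 w w).re)
    (Ncal : EuclideanSpace ℝ (Fin n) → H → H)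
    (hNcal : ∀ θ ∈ S.Θ, ‖θ‖ ≤ ν₀ / (2 * La) → ∀ v ∈ S.V 0,
      Ncal θ v ∈ S.W 0 ∧ ∀ w ∈ S.W 0, S.a θ (Ncal θ v) w = - S.a θ v w)
    (ε : ℝ) (hε0 : 0 < ε) (hε1 : ε < 1)
    (θ : EuclideanSpace ℝ (Fin n)) (hθ : θ ∈ S.Θ) (hθr : ‖θ‖ < ν₀ / (2 * La))
    (f : H → ℂ) (hf : IsBddConjLinear f)
    (u : H) (hu : ∀ w : H, ((ε : ℂ) ^ 2)⁻¹ * S.a θ u w + S.b θ u w = f w)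
    (M : ℝ) (hM : ∀ w : H, ‖f w‖ ≤ M * S.nrm θ w) :
    (∃! v₀ : H, v₀ ∈ S.V 0 ∧ ∀ vt ∈ S.V 0,
        ((ε : ℂ) ^ 2)⁻¹ * S.a θ (v₀ + Ncal θ v₀) (vt + Ncal θ vt) +
            S.b θ (v₀ + Ncal θ v₀) (vt + Ncal θ vt) = f (vt + Ncal θ vt)) ∧
      ∀ v₀ ∈ S.V 0,
        (∀ vt ∈ S.V 0,
            ((ε : ℂ) ^ 2)⁻¹ * S.a θ (v₀ + Ncal θ v₀) (vt + Ncal θ vt) +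
              S.b θ (v₀ + Ncal θ v₀) (vt + Ncal θ vt) = f (vt + Ncal θ vt)) →
          (ε ^ 2)⁻¹ * (S.a θ (u - (v₀ + Ncal θ v₀)) (u - (v₀ + Ncal θ v₀))).re +
                (S.b θ (u - (v₀ + Ncal θ v₀)) (u - (v₀ + Ncal θ v₀))).re ≤
              8 * K ^ 2 * ν₀⁻¹ * ε ^ 2 * M ^ 2 ∧
            (S.b θ (u - (v₀ + Ncal θ v₀)) (u - (v₀ + Ncal θ v₀))).re ≤
              16 * K ^ 4 * (ν₀ ^ 2)⁻¹ * ε ^ 4 * M ^ 2 := by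
  have hδν : La * ‖θ‖ ≤ ν₀ / 2 := by
    have := (lt_div_iff₀ (by positivity)).mp hθr
    linarith
  set a := S.aForm hθ
  set b := S.bForm hθ
  set V := (S.isNonneg_aForm h0).radical
  set W := (S.aForm h0 + S.bForm h0).leftOrthogonal V
  have hVW : IsCompl V W :=
    (S.isCoercive_add h0).isCompl_leftOrthogonal (S.isNonneg_aForm h0).isClosed_radical
  have hN : a.IsCorrector V W (Ncal θ) := fun v hv => hNcal θ hθ hθr.le v hv
  have hκ : ∀ ω ∈ S.W 0, ((a + b) ω ω).re ≤ 2 * K ^ 2 / ν₀ * (a ω ω).re := fun ω hω => by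
    rw [S.re_add_apply_self hθ]
    refine S.nsq_le_of_mem_W h0 hθ (hK θ hθ 0 h0) (fun w => ?_) hδν hν₀ hgap0 hω
    simpa using hLa 0 h0 θ hθ w w
  have hW : ∀ w ∈ S.W 0, a w w = 0 → w = 0 := fun w hw =>
    (S.isCoercive_add hθ).eq_zero_of_apply_self_eq_zero_of_le (hκ w hw)
  have hB := (S.isCoercive_add hθ).perturbed (S.isNonneg_aForm hθ) hε0 hε1.le
  refine ⟨hN.existsUnique_galerkin hVW hW hB hf.toContinuousLinearMap, fun v₀ hv₀ hv₀f => ?_⟩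
  obtain ⟨he, hbe⟩ := SesqForm.galerkin_error_le (S.isNonneg_aForm hθ) (S.isNonneg_bForm hθ)
    hε0 hε1.le hM hu (hN.add_mem_leftOrthogonal hv₀)
    ((hN.forall_mem_leftOrthogonal_iff hVW hW).mpr hv₀f) (by positivity) hκ (hN.exists_eq_add hVW)
  exact ⟨(SesqForm.re_perturbed_apply (a := a) (b := b) _ _).symm.trans_le (he.trans_eq (by ring)),
    hbe.trans_eq (by ring)⟩

theorem statement4
    {n : ℕ} (hn : 0 < n) {H : Type*} [NormedAddCommGroup H] [InnerProductSpace ℂ H]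
    [CompleteSpace H] (S : FormFamily n H)
    (K : ℝ) (hK0 : 0 < K)
    (hK : ∀ θ₁ ∈ S.Θ, ∀ θ₂ ∈ S.Θ, ∀ u : H, S.nrm θ₁ u ≤ K * S.nrm θ₂ u)
    (La : ℝ) (hLa0 : 0 < La)
    (hLa : ∀ θ₁ ∈ S.Θ, ∀ θ₂ ∈ S.Θ, ∀ u w : H,
      ‖S.a θ₁ u w - S.a θ₂ u w‖ ≤ La * ‖θ₁ - θ₂‖ * S.nrm θ₁ u * S.nrm θ₁ w)
    (h0 : (0 : EuclideanSpace ℝ (Fin n)) ∈ S.Θ)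
    (ν₀ : ℝ) (hν₀ : 0 < ν₀)
    (hgap0 : ∀ w ∈ S.W 0, ν₀ * S.nsq 0 w ≤ (S.a 0 w w).re)
    (Ncal : EuclideanSpace ℝ (Fin n) → H → H)
    (hNcal : ∀ θ ∈ S.Θ, ‖θ‖ ≤ ν₀ / (2 * La) → ∀ v ∈ S.V 0,
      Ncal θ v ∈ S.W 0 ∧ ∀ w ∈ S.W 0, S.a θ (Ncal θ v) w = - S.a θ v w)
    (ε : ℝ) (hε0 : 0 < ε) (hε1 : ε < 1)
    (θ : EuclideanSpace ℝ (Fin n)) (hθ : θ ∈ S.Θ) (hθr : ‖θ‖ < ν₀ / (2 * La))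
    (f : H → ℂ) (hf : IsBddConjLinear f)
    (u : H) (hu : ∀ w : H, ((ε : ℂ) ^ 2)⁻¹ * S.a θ u w + S.b θ u w = f w)
    (M : ℝ) (hM : ∀ w : H, ‖f w‖ ≤ M * S.nrm θ w) :
    (∃! v₀ : H, v₀ ∈ S.V 0 ∧ ∀ vt ∈ S.V 0,
        ((ε : ℂ) ^ 2)⁻¹ * S.a θ (v₀ + Ncal θ v₀) (vt + Ncal θ vt) +
            S.b θ (v₀ + Ncal θ v₀) (vt + Ncal θ vt) = f (vt + Ncal θ vt)) ∧
      ∀ v₀ ∈ S.V 0,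
        (∀ vt ∈ S.V 0,
            ((ε : ℂ) ^ 2)⁻¹ * S.a θ (v₀ + Ncal θ v₀) (vt + Ncal θ vt) +
              S.b θ (v₀ + Ncal θ v₀) (vt + Ncal θ vt) = f (vt + Ncal θ vt)) →
          (ε ^ 2)⁻¹ * (S.a θ (u - (v₀ + Ncal θ v₀)) (u - (v₀ + Ncal θ v₀))).re +
                (S.b θ (u - (v₀ + Ncal θ v₀)) (u - (v₀ + Ncal θ v₀))).re ≤
              8 * K ^ 2 * ν₀⁻¹ * ε ^ 2 * M ^ 2 ∧
            (S.b θ (u - (v₀ + Ncal θ v₀)) (u - (v₀ + Ncal θ v₀))).re ≤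
              16 * K ^ 4 * (ν₀ ^ 2)⁻¹ * ε ^ 4 * M ^ 2 :=
  statement4_general S K hK La hLa0 hLa h0 ν₀ hν₀ hgap0 Ncal hNcal ε hε0 hε1 θ hθ hθr f hf u hu M hM
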